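/- Let Y : D → S^{4,1} be a smooth conformal immersion satisfying the harmonic map equation Y_zz̄ + ⟨Y_z, Y_z̄⟩ Y = 0. Then the Bryant functional Q = ⟨Y_zz, Y_zz⟩ is holomorphic: ∂_z̄ Q = 0. -/

import Mathlib

noncomputable section
open Complex

/-- The Lorentzian bilinear form on `ℝ^{4,1} = ℝ⁵`. -/
def L5 (u v : Fin 5 → ℝ) : ℝ :=
  u 0 * v 0 + u 1 * v 1 + u 2 * v 2 + u 3 * v 3 - u 4 * v 4

/-- The ℂ-bilinear extension of the Lorentzian form to `ℂ⁵`. -/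
def LC (u v : Fin 5 → ℂ) : ℂ :=
  u 0 * v 0 + u 1 * v 1 + u 2 * v 2 + u 3 * v 3 - u 4 * v 4

/-- Partial derivative in the first variable. -/
def d1 {E : Type*} [NormedAddCommGroup E] [NormedSpace ℝ E]
    (f : ℝ × ℝ → E) (w : ℝ × ℝ) : E := fderiv ℝ f w (1, 0)

/-- Partial derivative in the second variable. -/
def d2 {E : Type*} [NormedAddCommGroup E] [NormedSpace ℝ E]
    (f : ℝ × ℝ → E) (w : ℝ × ℝ) : E := fderiv ℝ f w (0, 1)

/-- Complexification of a real vector-valued map. -/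
def cx (Y : ℝ × ℝ → Fin 5 → ℝ) : ℝ × ℝ → Fin 5 → ℂ := fun w i => (Y w i : ℂ)

/-- The Wirtinger derivative `∂_z f = (∂_x f − i ∂_y f)/2`. -/
def Zd (f : ℝ × ℝ → Fin 5 → ℂ) (w : ℝ × ℝ) : Fin 5 → ℂ :=
  fun i => (d1 f w i - Complex.I * d2 f w i) / 2

/-- The Wirtinger derivative `∂_z̄ f = (∂_x f + i ∂_y f)/2`. -/
def Zbd (f : ℝ × ℝ → Fin 5 → ℂ) (w : ℝ × ℝ) : Fin 5 → ℂ :=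
  fun i => (d1 f w i + Complex.I * d2 f w i) / 2

namespace Bry

def P1 (f : ℝ × ℝ → ℂ) (w : ℝ × ℝ) : ℂ := fderiv ℝ f w (1, 0)
def P2 (f : ℝ × ℝ → ℂ) (w : ℝ × ℝ) : ℂ := fderiv ℝ f w (0, 1)

/-- generic Wirtinger-type operator: c = -I gives ∂_z, c = I gives ∂_z̄. -/
def Dw (c : ℂ) (f : ℝ × ℝ → ℂ) (w : ℝ × ℝ) : ℂ := (P1 f w + c * P2 f w) / 2

lemma smooth_P1 {f : ℝ × ℝ → ℂ} (hf : ContDiff ℝ (⊤ : ℕ∞) f) : ContDiff ℝ (⊤ : ℕ∞) (P1 f) :=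
  (hf.fderiv_right (by simp)).clm_apply contDiff_const

lemma smooth_P2 {f : ℝ × ℝ → ℂ} (hf : ContDiff ℝ (⊤ : ℕ∞) f) : ContDiff ℝ (⊤ : ℕ∞) (P2 f) :=
  (hf.fderiv_right (by simp)).clm_apply contDiff_const

lemma smooth_Dw {f : ℝ × ℝ → ℂ} (c : ℂ) (hf : ContDiff ℝ (⊤ : ℕ∞) f) : ContDiff ℝ (⊤ : ℕ∞) (Dw c f) :=
  ((smooth_P1 hf).add (contDiff_const.mul (smooth_P2 hf))).div_const 2

lemma Dw_const (c a : ℂ) (w : ℝ × ℝ) : Dw c (fun _ => a) w = 0 := by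
  simp [Dw, P1, P2]

lemma Dw_mul {f g : ℝ × ℝ → ℂ} (c : ℂ) (hf : DifferentiableAt ℝ f w)
    (hg : DifferentiableAt ℝ g w) :
    Dw c (fun w => f w * g w) w = Dw c f w * g w + f w * Dw c g w := by
  simp only [Dw, P1, P2, fderiv_fun_mul hf hg, ContinuousLinearMap.add_apply,
    ContinuousLinearMap.smul_apply, smul_eq_mul]
  ring

end Bry

namespace Bry
variable {f : ℝ × ℝ → ℂ}

lemma fderiv_fderiv_apply (hf : ContDiff ℝ (⊤ : ℕ∞) f) (w u v : ℝ × ℝ) :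
    fderiv ℝ (fun w => fderiv ℝ f w v) w u = fderiv ℝ (fderiv ℝ f) w u v := by
  have hc : DifferentiableAt ℝ (fderiv ℝ f) w :=
    ((hf.fderiv_right (m := 1) (by change ((2 : ℕ∞) : WithTop ℕ∞) ≤ ((⊤ : ℕ∞) : WithTop ℕ∞); exact WithTop.coe_le_coe.mpr le_top)).differentiable (by simp)) w
  rw [fderiv_clm_apply hc (differentiableAt_const v)]
  simp

lemma schwarz (hf : ContDiff ℝ (⊤ : ℕ∞) f) (w : ℝ × ℝ) : P1 (P2 f) w = P2 (P1 f) w := by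
  have hd : ∀ y, HasFDerivAt f (fderiv ℝ f y) y := fun y =>
    ((hf.differentiable (by simp)) y).hasFDerivAt
  have hd2 : HasFDerivAt (fderiv ℝ f) (fderiv ℝ (fderiv ℝ f) w) w :=
    (((hf.fderiv_right (m := 1) (by change ((2 : ℕ∞) : WithTop ℕ∞) ≤ ((⊤ : ℕ∞) : WithTop ℕ∞); exact WithTop.coe_le_coe.mpr le_top)).differentiable (by simp)) w).hasFDerivAt
  have h := second_derivative_symmetric hd hd2 (1,0) (0,1)
  show fderiv ℝ (fun w => fderiv ℝ f w (0,1)) w (1,0)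
      = fderiv ℝ (fun w => fderiv ℝ f w (1,0)) w (0,1)
  rw [fderiv_fderiv_apply hf, fderiv_fderiv_apply hf]
  exact h

lemma P1_Dw (c : ℂ) (hf : ContDiff ℝ (⊤ : ℕ∞) f) (w : ℝ × ℝ) :
    P1 (Dw c f) w = (P1 (P1 f) w + c * P1 (P2 f) w) / 2 := by
  have h1 : DifferentiableAt ℝ (P1 f) w := (smooth_P1 hf).differentiable (by simp) w
  have h2 : DifferentiableAt ℝ (P2 f) w := (smooth_P2 hf).differentiable (by simp) w
  have : Dw c f = fun w => (1/2 : ℂ) * P1 f w + (c/2) * P2 f w := by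
    funext w; simp only [Dw]; ring
  rw [this]
  show fderiv ℝ _ w (1,0) = _
  rw [fderiv_fun_add ((h1.const_mul _)) ((h2.const_mul _)), fderiv_const_mul h1,
    fderiv_const_mul h2]
  simp only [ContinuousLinearMap.add_apply, ContinuousLinearMap.smul_apply, smul_eq_mul,
    P1, P2]
  ring

lemma P2_Dw (c : ℂ) (hf : ContDiff ℝ (⊤ : ℕ∞) f) (w : ℝ × ℝ) :
    P2 (Dw c f) w = (P2 (P1 f) w + c * P2 (P2 f) w) / 2 := by
  have h1 : DifferentiableAt ℝ (P1 f) w := (smooth_P1 hf).differentiable (by simp) w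
  have h2 : DifferentiableAt ℝ (P2 f) w := (smooth_P2 hf).differentiable (by simp) w
  have : Dw c f = fun w => (1/2 : ℂ) * P1 f w + (c/2) * P2 f w := by
    funext w; simp only [Dw]; ring
  rw [this]
  show fderiv ℝ _ w (0,1) = _
  rw [fderiv_fun_add ((h1.const_mul _)) ((h2.const_mul _)), fderiv_const_mul h1,
    fderiv_const_mul h2]
  simp only [ContinuousLinearMap.add_apply, ContinuousLinearMap.smul_apply, smul_eq_mul,
    P1, P2]
  ring

lemma Dw_comm (c c' : ℂ) (hf : ContDiff ℝ (⊤ : ℕ∞) f) (w : ℝ × ℝ) :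
    Dw c (Dw c' f) w = Dw c' (Dw c f) w := by
  simp only [Dw, P1_Dw _ hf, P2_Dw _ hf, schwarz hf]
  ring

end Bry

namespace Bry

lemma fderiv_pi_apply (g : ℝ × ℝ → Fin 5 → ℂ)
    (hg : ∀ i, ContDiff ℝ (⊤ : ℕ∞) (fun w => g w i)) (w u : ℝ × ℝ) (i : Fin 5) :
    fderiv ℝ g w u i = fderiv ℝ (fun w => g w i) w u := by
  have h1 : fderiv ℝ g w = ContinuousLinearMap.pi fun i => fderiv ℝ (fun w => g w i) w :=
    fderiv_pi (fun i => (hg i).differentiable (by simp) w)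
  rw [h1]; rfl

lemma Zd_comp (g : ℝ × ℝ → Fin 5 → ℂ)
    (hg : ∀ i, ContDiff ℝ (⊤ : ℕ∞) (fun w => g w i)) (w : ℝ × ℝ) (i : Fin 5) :
    Zd g w i = Dw (-Complex.I) (fun w => g w i) w := by
  simp only [Zd, d1, d2, Dw, P1, P2, fderiv_pi_apply g hg]
  ring

lemma Zbd_comp (g : ℝ × ℝ → Fin 5 → ℂ)
    (hg : ∀ i, ContDiff ℝ (⊤ : ℕ∞) (fun w => g w i)) (w : ℝ × ℝ) (i : Fin 5) :
    Zbd g w i = Dw Complex.I (fun w => g w i) w := by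
  simp only [Zbd, d1, d2, Dw, P1, P2, fderiv_pi_apply g hg]

/-- product rule for the Lorentzian pairing of 5 components. -/
lemma Dw_LC5 (c : ℂ) (f g : Fin 5 → ℝ × ℝ → ℂ)
    (hf : ∀ i, ContDiff ℝ (⊤ : ℕ∞) (f i)) (hg : ∀ i, ContDiff ℝ (⊤ : ℕ∞) (g i)) (w : ℝ × ℝ) :
    Dw c (fun w => f 0 w * g 0 w + f 1 w * g 1 w + f 2 w * g 2 w + f 3 w * g 3 w
        - f 4 w * g 4 w) w
      = (Dw c (f 0) w * g 0 w + Dw c (f 1) w * g 1 w + Dw c (f 2) w * g 2 w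
          + Dw c (f 3) w * g 3 w - Dw c (f 4) w * g 4 w)
        + (f 0 w * Dw c (g 0) w + f 1 w * Dw c (g 1) w + f 2 w * Dw c (g 2) w
          + f 3 w * Dw c (g 3) w - f 4 w * Dw c (g 4) w) := by
  have df : ∀ i, DifferentiableAt ℝ (f i) w := fun i => (hf i).differentiable (by simp) w
  have dg : ∀ i, DifferentiableAt ℝ (g i) w := fun i => (hg i).differentiable (by simp) w
  have dm : ∀ i, DifferentiableAt ℝ (fun w => f i w * g i w) w := fun i => (df i).mul (dg i)
  have key : ∀ (a b : ℝ × ℝ → ℂ), DifferentiableAt ℝ a w → DifferentiableAt ℝ b w →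
      Dw c (fun w => a w + b w) w = Dw c a w + Dw c b w := by
    intro a b ha hb
    simp only [Dw, P1, P2, fderiv_fun_add ha hb, ContinuousLinearMap.add_apply]
    ring
  have keys : ∀ (a b : ℝ × ℝ → ℂ), DifferentiableAt ℝ a w → DifferentiableAt ℝ b w →
      Dw c (fun w => a w - b w) w = Dw c a w - Dw c b w := by
    intro a b ha hb
    simp only [Dw, P1, P2, fderiv_fun_sub ha hb, ContinuousLinearMap.sub_apply]
    ring
  rw [keys _ _ (((dm 0).fun_add (dm 1)).fun_add ((dm 2)) |>.fun_add (dm 3)) (dm 4),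
    key _ _ (((dm 0).fun_add (dm 1)).fun_add (dm 2)) (dm 3),
    key _ _ ((dm 0).fun_add (dm 1)) (dm 2),
    key _ _ (dm 0) (dm 1),
    Dw_mul c (df 0) (dg 0), Dw_mul c (df 1) (dg 1), Dw_mul c (df 2) (dg 2),
    Dw_mul c (df 3) (dg 3), Dw_mul c (df 4) (dg 4)]
  ring

end Bry

namespace Bry
open Complex

def Xc (Y : ℝ × ℝ → Fin 5 → ℝ) (i : Fin 5) : ℝ × ℝ → ℂ := fun w => (Y w i : ℂ)
def Vc (Y : ℝ × ℝ → Fin 5 → ℝ) (i : Fin 5) : ℝ × ℝ → ℂ := Dw (-Complex.I) (Xc Y i)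
def Uc (Y : ℝ × ℝ → Fin 5 → ℝ) (i : Fin 5) : ℝ × ℝ → ℂ := Dw (-Complex.I) (Vc Y i)
def rhoF (Y : ℝ × ℝ → Fin 5 → ℝ) : ℝ × ℝ → ℂ := fun w =>
  Vc Y 0 w * Dw Complex.I (Xc Y 0) w + Vc Y 1 w * Dw Complex.I (Xc Y 1) w
  + Vc Y 2 w * Dw Complex.I (Xc Y 2) w + Vc Y 3 w * Dw Complex.I (Xc Y 3) w
  - Vc Y 4 w * Dw Complex.I (Xc Y 4) w

lemma Vc_def (Y : ℝ × ℝ → Fin 5 → ℝ) (i : Fin 5) : Dw (-Complex.I) (Xc Y i) = Vc Y i := rfl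
lemma Uc_def (Y : ℝ × ℝ → Fin 5 → ℝ) (i : Fin 5) : Dw (-Complex.I) (Vc Y i) = Uc Y i := rfl

lemma Dw_neg {f : ℝ × ℝ → ℂ} (c : ℂ) (w : ℝ × ℝ) (hf : DifferentiableAt ℝ f w) :
    Dw c (fun w => -f w) w = -Dw c f w := by
  simp only [Dw, P1, P2, fderiv_fun_neg, ContinuousLinearMap.neg_apply]
  ring

end Bry


/-- If `Y : D → S^{4,1}` is a smooth conformal immersion satisfying the
harmonic map equation `Y_zz̄ + ⟨Y_z, Y_z̄⟩ Y = 0`, then the Bryant functional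
`Q = ⟨Y_zz, Y_zz⟩` is holomorphic: `∂_z̄ Q = 0`. -/
theorem stmt17 (Y : ℝ × ℝ → Fin 5 → ℝ)
    (hY : ContDiff ℝ (⊤ : ℕ∞) Y)
    (hdeSitter : ∀ w, L5 (Y w) (Y w) = 1)
    (hconf : ∀ w, LC (Zd (cx Y) w) (Zd (cx Y) w) = 0)
    (hharm : ∀ w, Zbd (fun u => Zd (cx Y) u) w +
      LC (Zd (cx Y) w) (Zbd (cx Y) w) • cx Y w = 0) :
    ∀ w, d1 (fun u => LC (Zd (fun v => Zd (cx Y) v) u) (Zd (fun v => Zd (cx Y) v) u)) w +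
      Complex.I * d2 (fun u => LC (Zd (fun v => Zd (cx Y) v) u) (Zd (fun v => Zd (cx Y) v) u)) w = 0 := by
  classical
  intro w
  open Bry in
  -- smoothness
  have hX : ∀ i, ContDiff ℝ (⊤ : ℕ∞) (Xc Y i) := fun i =>
    Complex.ofRealCLM.contDiff.comp (contDiff_pi.mp hY i)
  have hV : ∀ i, ContDiff ℝ (⊤ : ℕ∞) (Vc Y i) := fun i => smooth_Dw _ (hX i)
  have hU : ∀ i, ContDiff ℝ (⊤ : ℕ∞) (Uc Y i) := fun i => smooth_Dw _ (hV i)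
  have hXb : ∀ i, ContDiff ℝ (⊤ : ℕ∞) (Dw Complex.I (Xc Y i)) := fun i => smooth_Dw _ (hX i)
  have hrho : ContDiff ℝ (⊤ : ℕ∞) (rhoF Y) := by
    refine ContDiff.sub (ContDiff.add (ContDiff.add (ContDiff.add ?_ ?_) ?_) ?_) ?_ <;>
      exact (hV _).mul (hXb _)
  -- component identifications
  have hXc : ∀ i, ContDiff ℝ (⊤ : ℕ∞) (fun w => cx Y w i) := hX
  have hZdX : ∀ w i, Zd (cx Y) w i = Vc Y i w := fun w i => Zd_comp (cx Y) hXc w i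
  have hZbdX : ∀ w i, Zbd (cx Y) w i = Dw Complex.I (Xc Y i) w := fun w i =>
    Zbd_comp (cx Y) hXc w i
  have hfun : (fun u => Zd (cx Y) u) = (fun w i => Vc Y i w) :=
    funext fun w => funext fun i => hZdX w i
  have hZdU : ∀ w i, Zd (fun v => Zd (cx Y) v) w i = Uc Y i w := by
    intro w i
    rw [hfun]
    exact Zd_comp _ (fun i => hV i) w i
  have hZbdV : ∀ w i, Zbd (fun u => Zd (cx Y) u) w i = Dw Complex.I (Vc Y i) w := by
    intro w i
    rw [hfun]
    exact Zbd_comp _ (fun i => hV i) w i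
  -- unit sphere, complexified
  have F0 : ∀ w, Xc Y 0 w * Xc Y 0 w + Xc Y 1 w * Xc Y 1 w + Xc Y 2 w * Xc Y 2 w
      + Xc Y 3 w * Xc Y 3 w - Xc Y 4 w * Xc Y 4 w = 1 := by
    intro w
    have h := hdeSitter w
    simp only [L5] at h
    have h2 : ((Y w 0 * Y w 0 + Y w 1 * Y w 1 + Y w 2 * Y w 2 + Y w 3 * Y w 3
        - Y w 4 * Y w 4 : ℝ) : ℂ) = ((1 : ℝ) : ℂ) := by rw [h]
    push_cast at h2
    exact h2
  -- ⟨X, V⟩ = 0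
  have F1 : ∀ w, Xc Y 0 w * Vc Y 0 w + Xc Y 1 w * Vc Y 1 w + Xc Y 2 w * Vc Y 2 w
      + Xc Y 3 w * Vc Y 3 w - Xc Y 4 w * Vc Y 4 w = 0 := by
    intro w
    have h1 : Dw (-Complex.I) (fun w => Xc Y 0 w * Xc Y 0 w + Xc Y 1 w * Xc Y 1 w
        + Xc Y 2 w * Xc Y 2 w + Xc Y 3 w * Xc Y 3 w - Xc Y 4 w * Xc Y 4 w) w = 0 := by
      rw [show (fun w => Xc Y 0 w * Xc Y 0 w + Xc Y 1 w * Xc Y 1 w + Xc Y 2 w * Xc Y 2 w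
          + Xc Y 3 w * Xc Y 3 w - Xc Y 4 w * Xc Y 4 w) = fun _ => (1 : ℂ) from funext F0]
      exact Dw_const _ _ _
    rw [Dw_LC5 _ (Xc Y) (Xc Y) hX hX w] at h1
    simp only [Vc_def] at h1
    linear_combination h1 / 2
  -- conformality: ⟨V, V⟩ = 0
  have F2 : ∀ w, Vc Y 0 w * Vc Y 0 w + Vc Y 1 w * Vc Y 1 w + Vc Y 2 w * Vc Y 2 w
      + Vc Y 3 w * Vc Y 3 w - Vc Y 4 w * Vc Y 4 w = 0 := by
    intro w
    have h := hconf w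
    simp only [LC, hZdX] at h
    exact h
  -- ⟨X, U⟩ = 0
  have F3 : ∀ w, Xc Y 0 w * Uc Y 0 w + Xc Y 1 w * Uc Y 1 w + Xc Y 2 w * Uc Y 2 w
      + Xc Y 3 w * Uc Y 3 w - Xc Y 4 w * Uc Y 4 w = 0 := by
    intro w
    have h1 : Dw (-Complex.I) (fun w => Xc Y 0 w * Vc Y 0 w + Xc Y 1 w * Vc Y 1 w
        + Xc Y 2 w * Vc Y 2 w + Xc Y 3 w * Vc Y 3 w - Xc Y 4 w * Vc Y 4 w) w = 0 := by
      rw [show (fun w => Xc Y 0 w * Vc Y 0 w + Xc Y 1 w * Vc Y 1 w + Xc Y 2 w * Vc Y 2 w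
          + Xc Y 3 w * Vc Y 3 w - Xc Y 4 w * Vc Y 4 w) = fun _ => (0 : ℂ) from funext F1]
      exact Dw_const _ _ _
    rw [Dw_LC5 _ (Xc Y) (Vc Y) hX hV w] at h1
    simp only [Vc_def, Uc_def] at h1
    linear_combination h1 - F2 w
  -- ⟨V, U⟩ = 0
  have F4 : ∀ w, Vc Y 0 w * Uc Y 0 w + Vc Y 1 w * Uc Y 1 w + Vc Y 2 w * Uc Y 2 w
      + Vc Y 3 w * Uc Y 3 w - Vc Y 4 w * Uc Y 4 w = 0 := by
    intro w
    have h1 : Dw (-Complex.I) (fun w => Vc Y 0 w * Vc Y 0 w + Vc Y 1 w * Vc Y 1 w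
        + Vc Y 2 w * Vc Y 2 w + Vc Y 3 w * Vc Y 3 w - Vc Y 4 w * Vc Y 4 w) w = 0 := by
      rw [show (fun w => Vc Y 0 w * Vc Y 0 w + Vc Y 1 w * Vc Y 1 w + Vc Y 2 w * Vc Y 2 w
          + Vc Y 3 w * Vc Y 3 w - Vc Y 4 w * Vc Y 4 w) = fun _ => (0 : ℂ) from funext F2]
      exact Dw_const _ _ _
    rw [Dw_LC5 _ (Vc Y) (Vc Y) hV hV w] at h1
    simp only [Uc_def] at h1
    linear_combination h1 / 2
  -- harmonic map equation, componentwise: Wb V i = -(rho * X i)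
  have FH : ∀ i, Dw Complex.I (Vc Y i) = fun w => -(rhoF Y w * Xc Y i w) := by
    intro i
    funext w
    have h := congrFun (hharm w) i
    simp only [Pi.add_apply, Pi.smul_apply, smul_eq_mul, Pi.zero_apply] at h
    rw [hZbdV w i] at h
    have e2 : LC (Zd (cx Y) w) (Zbd (cx Y) w) = rhoF Y w := by
      simp only [LC, hZdX, hZbdX, rhoF]
    rw [e2] at h
    have e3 : cx Y w i = Xc Y i w := rfl
    rw [e3] at h
    linear_combination h
  -- ∂_z̄ of U, via commutation of Wirtinger derivatives and the harmonic equation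
  have F6 : ∀ i, Dw Complex.I (Uc Y i) w
      = -(Dw (-Complex.I) (rhoF Y) w * Xc Y i w) - rhoF Y w * Vc Y i w := by
    intro i
    have h1 : Dw Complex.I (Uc Y i) w = Dw (-Complex.I) (Dw Complex.I (Vc Y i)) w := by
      show Dw Complex.I (Dw (-Complex.I) (Vc Y i)) w = _
      exact Dw_comm _ _ (hV i) w
    rw [h1, FH i]
    rw [Dw_neg (f := fun w => rhoF Y w * Xc Y i w) _ w ((hrho.differentiable (by simp) w).mul ((hX i).differentiable (by simp) w))]
    rw [Dw_mul _ (hrho.differentiable (by simp) w) ((hX i).differentiable (by simp) w)]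
    simp only [Vc_def]
    ring
  -- identify Q with the pairing of U with itself
  have hQ : (fun u => LC (Zd (fun v => Zd (cx Y) v) u) (Zd (fun v => Zd (cx Y) v) u))
      = fun w => Uc Y 0 w * Uc Y 0 w + Uc Y 1 w * Uc Y 1 w + Uc Y 2 w * Uc Y 2 w
        + Uc Y 3 w * Uc Y 3 w - Uc Y 4 w * Uc Y 4 w := by
    funext u
    simp only [LC, hZdU]
  rw [hQ]
  have hDQ : Dw Complex.I (fun w => Uc Y 0 w * Uc Y 0 w + Uc Y 1 w * Uc Y 1 w
      + Uc Y 2 w * Uc Y 2 w + Uc Y 3 w * Uc Y 3 w - Uc Y 4 w * Uc Y 4 w) w = 0 := by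
    rw [Dw_LC5 Complex.I (Uc Y) (Uc Y) hU hU w]
    rw [F6 0, F6 1, F6 2, F6 3, F6 4]
    linear_combination (-2 * Dw (-Complex.I) (rhoF Y) w) * F3 w + (-2 * rhoF Y w) * F4 w
  simp only [Dw] at hDQ
  show P1 _ w + Complex.I * P2 _ w = 0
  linear_combination 2 * hDQ
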